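/- Assume hypotheses (EC) and (UC). Let r ∈ (0,r_T) and M > 0. Then the second type optimal time problem (TP)^{M,r} has an optimal control if and only if M ≥ M(0,r). -/

import Mathlib

open MeasureTheory Set Filter Topology

noncomputable section

variable {H : Type*} [NormedAddCommGroup H] [InnerProductSpace ℂ H] [CompleteSpace H]
  [SecondCountableTopology H]

/-- `U` is a strongly continuous one-parameter group of unitary operators on `H`,
abstracting the Schrödinger group `e^{-iΔt}`. -/
def IsUnitaryGroup (U : ℝ → H →L[ℂ] H) : Prop :=
  U 0 = ContinuousLinearMap.id ℂ H ∧
  (∀ s t : ℝ, U (s + t) = (U s).comp (U t)) ∧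
  (∀ (t : ℝ) (x : H), ‖U t x‖ = ‖x‖) ∧
  ∀ x : H, Continuous fun t : ℝ => U t x

/-- `B` is a nonzero orthogonal projection on `H`, abstracting multiplication by `χ_ω`. -/
def IsOrthProj (B : H →L[ℂ] H) : Prop :=
  B ≠ 0 ∧ B.comp B = B ∧ ∀ x y : H, (inner ℂ (B x) y : ℂ) = inner ℂ x (B y)

/-- Membership in `L∞((a,b);H)`. -/
def MemLinfty (u : ℝ → H) (a b : ℝ) : Prop :=
  AEStronglyMeasurable u (volume : Measure ℝ) ∧
    ∃ c : ℝ, ∀ᵐ t : ℝ ∂volume, t ∈ Ioo a b → ‖u t‖ ≤ c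

/-- Membership in `L∞((0,∞);H)`. -/
def MemLinftyInf (u : ℝ → H) : Prop :=
  AEStronglyMeasurable u (volume : Measure ℝ) ∧
    ∃ c : ℝ, ∀ᵐ t : ℝ ∂volume, t ∈ Ioi (0 : ℝ) → ‖u t‖ ≤ c

/-- The `L∞((a,b);H)` norm of `u`. -/
def supNorm (u : ℝ → H) (a b : ℝ) : ℝ :=
  sInf {c : ℝ | 0 ≤ c ∧ ∀ᵐ t : ℝ ∂volume, t ∈ Ioo a b → ‖u t‖ ≤ c}

/-- `stateT U B T τ u y₀ = y(T; χ_{(τ,T)}u, y₀)`, the mild solution at time `T` of the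
controlled Schrödinger equation with initial state `y₀`, the control acting on `(τ,T)`:
`y(T) = U(T)y₀ + ∫_τ^T U(T-s) B u(s) ds`.  The free state at time `t` starting from `y₀`
with control `u` active from time `0` is `stateT U B t 0 u y₀`. -/
def stateT (U : ℝ → H →L[ℂ] H) (B : H →L[ℂ] H) (T τ : ℝ) (u : ℝ → H) (y₀ : H) : H :=
  U T y₀ + ∫ s in Ioo τ T, U (T - s) (B (u s))

/-- Hypothesis (EC): `L∞`-exact controllability with cost. -/
def EC (U : ℝ → H →L[ℂ] H) (B : H →L[ℂ] H) : Prop :=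
  ∀ τ : ℝ, 0 < τ → ∃ C : ℝ, 0 < C ∧ ∀ y₀ z : H, ∃ u : ℝ → H,
    AEStronglyMeasurable u (volume : Measure ℝ) ∧
    (∀ᵐ t : ℝ ∂volume, t ∈ Ioo 0 τ → ‖u t‖ ≤ C * ‖z - U τ y₀‖) ∧
    stateT U B τ 0 u y₀ = z

/-- Hypothesis (UC): unique continuation. -/
def UC (U : ℝ → H →L[ℂ] H) (B : H →L[ℂ] H) : Prop :=
  ∀ η : H, η ≠ 0 → volume {t : ℝ | B (U t η) = 0} = 0

/-- The admissible set `U_M` of the minimal time problem `(TOCP)_M`. -/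
def UMset (U : ℝ → H →L[ℂ] H) (B : H →L[ℂ] H) (y₀ : H) (M : ℝ) : Set (ℝ → H) :=
  {u | MemLinftyInf u ∧ (∀ᵐ t : ℝ ∂volume, t ∈ Ioi (0 : ℝ) → ‖u t‖ ≤ M) ∧
    ∃ s : ℝ, 0 < s ∧ stateT U B s 0 u y₀ = 0}

/-- The minimal time `T_M` of `(TOCP)_M`. -/
def Tmin (U : ℝ → H →L[ℂ] H) (B : H →L[ℂ] H) (y₀ : H) (M : ℝ) : ℝ :=
  sInf {s : ℝ | 0 < s ∧ ∃ u ∈ UMset U B y₀ M, stateT U B s 0 u y₀ = 0}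

/-- The admissible set `V_T` of the minimal norm problem `(NOCP)_T`. -/
def VTset (U : ℝ → H →L[ℂ] H) (B : H →L[ℂ] H) (y₀ : H) (T : ℝ) : Set (ℝ → H) :=
  {v | MemLinfty v 0 T ∧ stateT U B T 0 v y₀ = 0}

/-- The minimal norm `M_T` of `(NOCP)_T`. -/
def Mmin (U : ℝ → H →L[ℂ] H) (B : H →L[ℂ] H) (y₀ : H) (T : ℝ) : ℝ :=
  sInf ((fun v : ℝ → H => supNorm v 0 T) '' VTset U B y₀ T)

/-- Hypothesis (BB): bang-bang property of the minimal time problems. -/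
def BB (U : ℝ → H →L[ℂ] H) (B : H →L[ℂ] H) : Prop :=
  ∀ y₀ : H, y₀ ≠ 0 → ∀ M : ℝ, 0 < M → ∀ u ∈ UMset U B y₀ M,
    stateT U B (Tmin U B y₀ M) 0 u y₀ = 0 →
    ∀ᵐ t : ℝ ∂volume, t ∈ Ioo 0 (Tmin U B y₀ M) → ‖u t‖ = M

/-- Hypothesis (ET): existence of optimal controls for the minimal time problems. -/
def ET (U : ℝ → H →L[ℂ] H) (B : H →L[ℂ] H) : Prop :=
  ∀ y₀ : H, y₀ ≠ 0 → ∀ M : ℝ, 0 < M →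
    ∃ u ∈ UMset U B y₀ M, stateT U B (Tmin U B y₀ M) 0 u y₀ = 0

/-- The admissible set `U_{M,τ}`. -/
def UadmSet (M τ T : ℝ) : Set (ℝ → H) :=
  {u | MemLinfty u 0 T ∧ ∀ᵐ t : ℝ ∂volume, t ∈ Ioo τ T → ‖u t‖ ≤ M}

/-- The optimal distance `r(M,τ)` of the optimal target problem `(OP)^{M,τ}`. -/
def rOP (U : ℝ → H →L[ℂ] H) (B : H →L[ℂ] H) (y₀ z_d : H) (T M τ : ℝ) : ℝ :=
  sInf ((fun u : ℝ → H => ‖stateT U B T τ u y₀ - z_d‖) '' UadmSet M τ T)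

/-- `u` is an optimal control to `(OP)^{M,τ}`. -/
def IsOptOP (U : ℝ → H →L[ℂ] H) (B : H →L[ℂ] H) (y₀ z_d : H) (T M τ : ℝ) (u : ℝ → H) :
    Prop :=
  u ∈ UadmSet M τ T ∧ ‖stateT U B T τ u y₀ - z_d‖ = rOP U B y₀ z_d T M τ

/-- `M^τ`, the minimal norm for exact steering to the target `z_d`. -/
def Mtau (U : ℝ → H →L[ℂ] H) (B : H →L[ℂ] H) (y₀ z_d : H) (T τ : ℝ) : ℝ :=
  sInf ((fun u : ℝ → H => supNorm u τ T) ''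
    {u : ℝ → H | MemLinfty u 0 T ∧ stateT U B T τ u y₀ = z_d})

/-- The admissible set `W_{τ,r}` of the optimal norm problem `(NP)^{τ,r}`. -/
def WadmSet (U : ℝ → H →L[ℂ] H) (B : H →L[ℂ] H) (y₀ z_d : H) (T τ r : ℝ) :
    Set (ℝ → H) :=
  {u | MemLinfty u 0 T ∧ ‖stateT U B T τ u y₀ - z_d‖ ≤ r}

/-- The optimal norm `M(τ,r)` of `(NP)^{τ,r}`. -/
def MNP (U : ℝ → H →L[ℂ] H) (B : H →L[ℂ] H) (y₀ z_d : H) (T τ r : ℝ) : ℝ :=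
  sInf ((fun u : ℝ → H => supNorm u τ T) '' WadmSet U B y₀ z_d T τ r)

/-- `u` is an optimal control to `(NP)^{τ,r}`. -/
def IsOptNP (U : ℝ → H →L[ℂ] H) (B : H →L[ℂ] H) (y₀ z_d : H) (T τ r : ℝ) (u : ℝ → H) :
    Prop :=
  u ∈ WadmSet U B y₀ z_d T τ r ∧ supNorm u τ T = MNP U B y₀ z_d T τ r

/-- The admissible set `V_{M,r}` of the second type optimal time problem `(TP)^{M,r}`. -/
def VadmSet (U : ℝ → H →L[ℂ] H) (B : H →L[ℂ] H) (y₀ z_d : H) (T M r : ℝ) :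
    Set (ℝ → H) :=
  {u | ∃ τ : ℝ, τ ∈ Ico (0 : ℝ) T ∧ u ∈ UadmSet M τ T ∧
    ‖stateT U B T τ u y₀ - z_d‖ ≤ r}

/-- `τ_{M,r}(u)`. -/
def tauOf (U : ℝ → H →L[ℂ] H) (B : H →L[ℂ] H) (y₀ z_d : H) (T r : ℝ) (u : ℝ → H) : ℝ :=
  sSup {τ : ℝ | τ ∈ Ico (0 : ℝ) T ∧ ‖stateT U B T τ u y₀ - z_d‖ ≤ r}

/-- The optimal time `τ(M,r)` of `(TP)^{M,r}`. -/
def tauTP (U : ℝ → H →L[ℂ] H) (B : H →L[ℂ] H) (y₀ z_d : H) (T M r : ℝ) : ℝ :=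
  sSup (tauOf U B y₀ z_d T r '' VadmSet U B y₀ z_d T M r)

/-- `u` is an optimal control to `(TP)^{M,r}`. -/
def IsOptTP (U : ℝ → H →L[ℂ] H) (B : H →L[ℂ] H) (y₀ z_d : H) (T M r : ℝ) (u : ℝ → H) :
    Prop :=
  u ∈ VadmSet U B y₀ z_d T M r ∧
    ‖stateT U B T (tauTP U B y₀ z_d T M r) u y₀ - z_d‖ ≤ r

/-- The adjoint state `φ*(t) = U(t-T)(z_d - y(T; χ_{(τ,T)}u, y₀))`. -/
def adjState (U : ℝ → H →L[ℂ] H) (B : H →L[ℂ] H) (y₀ z_d : H) (T τ : ℝ) (u : ℝ → H)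
    (t : ℝ) : H :=
  U (t - T) (z_d - stateT U B T τ u y₀)

/-!
Write `CanSteer M τ ρ` for: some control of norm at most `M`, acting on `(τ, T)`, brings the
state at time `T` within `ρ` of `z_d`. The key fact is that this property is closed: if it holds
with `(M + ε, ρ + ε)` for every `ε > 0`, it holds with `(M, ρ)`. Indeed the `M`-bounded controls
in `L²((τ, T); H)` lie in a weak-* compact ball (Banach–Alaoglu), and both requirements are
intersections of weakly closed half-spaces: the pointwise bound is tested against the `L¹`-norms
of `L²` functions, the distance to `z_d` through the adjoint `h ↦ B U(· - T) h` of the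
control-to-state map.

Hence `M(0, r) ≤ M` says exactly that `CanSteer M 0 r` holds ((EC) makes `W_{0,r}` nonempty, so
`M(0, r)` is a genuine infimum). The starting times `τ ∈ [0, T)` with `CanSteer M τ r` are at
most `T - (‖U(T)y₀ - z_d‖ - r) / M`, and their supremum, which is `τ(M, r)`, is again such a
time, since starting `δ` later costs at most `M δ` in distance. A control steering from that
time is an optimal control.
-/

open scoped ENNReal InnerProductSpace

section WeakCompactness

variable {𝕜 E : Type*} [RCLike 𝕜] [NormedAddCommGroup E] [InnerProductSpace 𝕜 E]
  [CompleteSpace E]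

theorem exists_forall_re_inner_le_of_forall_pos {ι : Type*} {R : ℝ} (g : ι → E)
    (β γ : ι → ℝ) (hγ : ∀ i, 0 ≤ γ i)
    (h : ∀ ε > 0, ∃ u : E, ‖u‖ ≤ R ∧ ∀ i, RCLike.re ⟪u, g i⟫_𝕜 ≤ β i + ε * γ i) :
    ∃ u : E, ‖u‖ ≤ R ∧ ∀ i, RCLike.re ⟪u, g i⟫_𝕜 ≤ β i := by
  let F : ℕ → Set (WeakDual 𝕜 E) := fun n =>
    WeakDual.toStrongDual ⁻¹' Metric.closedBall 0 R ∩
      ⋂ i, {ℓ | RCLike.re (ℓ (g i)) ≤ β i + 1 / (n + 1) * γ i}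
  have hclosed (n : ℕ) : IsClosed (F n) :=
    (WeakDual.isClosed_closedBall 0 R).inter <| isClosed_iInter fun i =>
      isClosed_le (RCLike.continuous_re.comp (WeakDual.eval_continuous _)) continuous_const
  have hanti (n : ℕ) : F (n + 1) ⊆ F n := fun ℓ hℓ => by
    refine ⟨hℓ.1, mem_iInter.2 fun i => ?_⟩
    have hi : RCLike.re (ℓ (g i)) ≤ β i + 1 / ((n + 1 : ℕ) + 1) * γ i := mem_iInter.1 hℓ.2 i
    refine hi.trans ?_
    gcongr β i + ?_ * γ i
    · exact hγ i
    · exact one_div_le_one_div_of_le (by positivity) (by push_cast; linarith)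
  have hne (n : ℕ) : (F n).Nonempty := by
    obtain ⟨u, hu, hug⟩ := h (1 / (n + 1)) (by positivity)
    refine ⟨StrongDual.toWeakDual (InnerProductSpace.toDual 𝕜 E u), ?_, mem_iInter.2 hug⟩
    simpa using hu
  obtain ⟨ℓ, hℓ⟩ := IsCompact.nonempty_iInter_of_sequence_nonempty_isCompact_isClosed F hanti
    hne ((WeakDual.isCompact_closedBall 0 R).of_isClosed_subset (hclosed 0) inter_subset_left)
    hclosed
  have hℓ (n : ℕ) := mem_iInter.1 hℓ n
  refine ⟨(InnerProductSpace.toDual 𝕜 E).symm (WeakDual.toStrongDual ℓ), ?_, fun i => ?_⟩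
  · simpa using (hℓ 0).1
  · have hlim := (tendsto_one_div_add_atTop_nhds_zero_nat.mul_const (γ i)).const_add (β i)
    rw [zero_mul, add_zero] at hlim
    refine ge_of_tendsto' hlim fun n => ?_
    rw [← InnerProductSpace.toDual_apply_apply, LinearIsometryEquiv.apply_symm_apply]
    exact mem_iInter.1 (hℓ n).2 i

end WeakCompactness

section EssentialBound

variable {𝕜 E α : Type*} [RCLike 𝕜] [NormedAddCommGroup E] [InnerProductSpace 𝕜 E]
  [MeasurableSpace α] {μ : Measure α} [IsFiniteMeasure μ]

theorem ae_norm_le_iff_forall_re_inner_le (f : Lp E 2 μ) {M : ℝ}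
    (hM : 0 ≤ M) :
    (∀ᵐ a ∂μ, ‖f a‖ ≤ M) ↔ ∀ g : Lp E 2 μ, RCLike.re ⟪f, g⟫_𝕜 ≤ M * ∫ a, ‖g a‖ ∂μ := by
  constructor
  · intro hf g
    have hg : Integrable (fun a => ‖g a‖) μ := ((Lp.memLp g).integrable one_le_two).norm
    calc RCLike.re ⟪f, g⟫_𝕜 ≤ ‖⟪f, g⟫_𝕜‖ := RCLike.re_le_norm _
      _ ≤ ∫ a, ‖⟪f a, g a⟫_𝕜‖ ∂μ := by
          rw [L2.inner_def]; exact norm_integral_le_integral_norm _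
      _ ≤ ∫ a, M * ‖g a‖ ∂μ := by
          refine integral_mono_ae (L2.integrable_inner f g).norm (hg.const_mul M) ?_
          filter_upwards [hf] with a ha
          exact (norm_inner_le_norm _ _).trans (by gcongr)
      _ = M * ∫ a, ‖g a‖ ∂μ := integral_const_mul M _
  · intro h
    obtain ⟨F, hFm, hfF⟩ := Lp.aestronglyMeasurable f
    set A := {a | M < ‖F a‖}
    have hA : MeasurableSet A := measurableSet_lt measurable_const hFm.norm.measurable
    have hF : MemLp F 2 μ := (Lp.memLp f).ae_eq hfF
    have hAF : MemLp (A.indicator F) 2 μ := hF.indicator hA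
    -- test against the part of `f` exceeding `M`
    have hinner : RCLike.re ⟪f, hAF.toLp _⟫_𝕜 = ∫ a in A, ‖F a‖ ^ 2 ∂μ := by
      rw [L2.inner_def, ← integral_re (L2.integrable_inner (𝕜 := 𝕜) f _),
        ← integral_indicator hA]
      refine integral_congr_ae ?_
      filter_upwards [hfF, hAF.coeFn_toLp] with a h1 h2
      rw [h1, h2]
      by_cases ha : a ∈ A <;> simp [ha]
    have hnorm : ∫ a, ‖hAF.toLp _ a‖ ∂μ = ∫ a in A, ‖F a‖ ∂μ := by
      rw [← integral_indicator hA]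
      refine integral_congr_ae ?_
      filter_upwards [hAF.coeFn_toLp] with a ha
      rw [ha, norm_indicator_eq_indicator_norm]
    have hint : IntegrableOn (fun a => ‖F a‖ * (‖F a‖ - M)) A μ := by
      simp_rw [mul_sub, ← sq]
      exact (hF.norm.integrable_sq.sub ((hF.integrable one_le_two).norm.mul_const M)).integrableOn
    have hle : ∫ a in A, ‖F a‖ * (‖F a‖ - M) ∂μ ≤ 0 := by
      have := h (hAF.toLp _)
      rw [hinner, hnorm] at this
      simp_rw [mul_sub, ← sq]
      rw [integral_sub hF.norm.integrable_sq.integrableOn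
        ((hF.integrable one_le_two).norm.mul_const M).integrableOn, integral_mul_const]
      linarith [mul_comm M (∫ a in A, ‖F a‖ ∂μ)]
    have hpos : ∀ a ∈ A, 0 < ‖F a‖ * (‖F a‖ - M) := fun a ha =>
      mul_pos (hM.trans_lt ha) (sub_pos.2 ha)
    have hA0 : μ A = 0 := by
      by_contra hA0
      have := (setIntegral_pos_iff_support_of_nonneg_ae
        ((ae_restrict_iff' hA).2 (Eventually.of_forall fun a ha => (hpos a ha).le)) hint).2
      rw [inter_eq_right.2 (show A ⊆ Function.support _ from fun a ha => (hpos a ha).ne')]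
        at this
      linarith [this (pos_iff_ne_zero.2 hA0)]
    filter_upwards [hfF, measure_eq_zero_iff_ae_notMem.1 hA0] with a h1 h2
    rw [h1]
    exact not_lt.1 h2

end EssentialBound

theorem ae_norm_indicator_le {α F : Type*} [MeasurableSpace α] {μ : Measure α}
    [NormedAddCommGroup F] {s : Set α} {u : α → F} {M : ℝ} (hM : 0 ≤ M)
    (huM : ∀ᵐ a ∂μ, a ∈ s → ‖u a‖ ≤ M) : ∀ᵐ a ∂μ, ‖s.indicator u a‖ ≤ M := by
  filter_upwards [huM] with a ha
  by_cases hs : a ∈ s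
  · simpa [hs] using ha hs
  · simpa [hs] using hM

theorem supNorm_le {F : Type*} [NormedAddCommGroup F] {u : ℝ → F} {a b M : ℝ} (hM : 0 ≤ M)
    (h : ∀ᵐ t, t ∈ Ioo a b → ‖u t‖ ≤ M) : supNorm u a b ≤ M :=
  csInf_le ⟨0, fun _ hc => hc.1⟩ ⟨hM, h⟩

theorem ae_norm_le_of_supNorm_lt {F : Type*} [NormedAddCommGroup F] {u : ℝ → F} {a b c M : ℝ}
    (hc : ∀ᵐ t, t ∈ Ioo a b → ‖u t‖ ≤ c) (h : supNorm u a b < M) :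
    ∀ᵐ t, t ∈ Ioo a b → ‖u t‖ ≤ M := by
  obtain ⟨c', ⟨-, hc'⟩, hc'M⟩ :=
    exists_lt_of_csInf_lt (s := {c | 0 ≤ c ∧ ∀ᵐ t, t ∈ Ioo a b → ‖u t‖ ≤ c})
      ⟨max c 0, le_max_right _ _, hc.mono fun t ht hmem => (ht hmem).trans (le_max_left _ _)⟩ h
  filter_upwards [hc'] with t ht hmem using (ht hmem).trans hc'M.le

section Control

variable {E : Type*} [NormedAddCommGroup E] [InnerProductSpace ℂ E]
  {U : ℝ → E →L[ℂ] E} {B : E →L[ℂ] E}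

theorem IsOrthProj.norm_le (hB : IsOrthProj B) (x : E) : ‖B x‖ ≤ ‖x‖ := by
  have hsq : ‖B x‖ ^ 2 ≤ ‖x‖ * ‖B x‖ := by
    rw [← inner_self_eq_norm_sq (𝕜 := ℂ), hB.2.2, ← ContinuousLinearMap.comp_apply, hB.2.1]
    exact (RCLike.re_le_norm _).trans (norm_inner_le_norm _ _)
  nlinarith [norm_nonneg x, norm_nonneg (B x)]

theorem IsUnitaryGroup.norm_map (hU : IsUnitaryGroup U) (t : ℝ) (x : E) : ‖U t x‖ = ‖x‖ :=
  hU.2.2.1 t x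

theorem IsUnitaryGroup.inner_map_left (hU : IsUnitaryGroup U) (t : ℝ) (x y : E) :
    ⟪U t x, y⟫_ℂ = ⟪x, U (-t) y⟫_ℂ := by
  have hy : U t (U (-t) y) = y := by
    rw [← ContinuousLinearMap.comp_apply, ← hU.2.1, add_neg_cancel, hU.1]
    rfl
  conv_lhs => rw [← hy]
  exact LinearIsometry.inner_map_map ⟨(U t).toLinearMap, hU.norm_map t⟩ x _

theorem IsUnitaryGroup.continuous_uncurry (hU : IsUnitaryGroup U) :
    Continuous fun p : ℝ × E => U p.1 p.2 :=
  continuous_prod_of_continuous_lipschitzWith' _ 1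
    (fun t => LinearIsometry.lipschitz ⟨(U t).toLinearMap, hU.norm_map t⟩) hU.2.2.2

theorem IsUnitaryGroup.aestronglyMeasurable_integrand (hU : IsUnitaryGroup U) {μ : Measure ℝ}
    {u : ℝ → E} (hu : AEStronglyMeasurable u μ) (T : ℝ) :
    AEStronglyMeasurable (fun s => U (T - s) (B (u s))) μ :=
  hU.continuous_uncurry.comp_aestronglyMeasurable
    ((continuous_const.sub continuous_id).aestronglyMeasurable.prodMk
      (B.continuous.comp_aestronglyMeasurable hu))

theorem norm_integrand_le (hU : IsUnitaryGroup U) (hB : IsOrthProj B) (T s : ℝ) (x : E) :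
    ‖U (T - s) (B x)‖ ≤ ‖x‖ :=
  (hU.norm_map _ _).trans_le (hB.norm_le x)

theorem stateT_self (T : ℝ) (u : ℝ → E) (y₀ : E) : stateT U B T T u y₀ = U T y₀ := by
  simp [stateT]

theorem stateT_congr_ae {T τ : ℝ} {u u' : ℝ → E} (h : u =ᵐ[volume.restrict (Ioo τ T)] u')
    (y₀ : E) : stateT U B T τ u y₀ = stateT U B T τ u' y₀ := by
  rw [stateT, stateT]
  congr 1
  refine integral_congr_ae ?_
  filter_upwards [h] with s hs
  rw [hs]

theorem stateT_indicator {T τ σ : ℝ} (hτσ : τ ≤ σ) (u : ℝ → E) (y₀ : E) :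
    stateT U B T τ ((Ioo σ T).indicator u) y₀ = stateT U B T σ u y₀ := by
  have h (s : ℝ) : U (T - s) (B ((Ioo σ T).indicator u s)) =
      (Ioo σ T).indicator (fun s => U (T - s) (B (u s))) s := by
    by_cases hs : s ∈ Ioo σ T <;> simp [hs]
  simp only [stateT, h, setIntegral_indicator measurableSet_Ioo, Ioo_inter_Ioo,
    max_eq_right hτσ, min_self]

theorem norm_stateT_sub_stateT_le (hU : IsUnitaryGroup U) (hB : IsOrthProj B) {T σ τ M : ℝ}
    (hστ : σ ≤ τ) (hτT : τ ≤ T) {u : ℝ → E} (hu : AEStronglyMeasurable u volume)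
    (huM : ∀ᵐ t, t ∈ Ioo σ T → ‖u t‖ ≤ M) (y₀ : E) :
    ‖stateT U B T σ u y₀ - stateT U B T τ u y₀‖ ≤ M * (τ - σ) := by
  have hsub : Ioo τ T ⊆ Ioo σ T := Ioo_subset_Ioo_left hστ
  have hbound : ∀ᵐ t, t ∈ Ioo σ T → ‖U (T - t) (B (u t))‖ ≤ M := by
    filter_upwards [huM] with t ht hmem
    exact (norm_integrand_le hU hB T t _).trans (ht hmem)
  have hint : IntegrableOn (fun s => U (T - s) (B (u s))) (Ioo σ T) :=
    Measure.integrableOn_of_bounded measure_Ioo_lt_top.ne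
      (hU.aestronglyMeasurable_integrand hu T) ((ae_restrict_iff' measurableSet_Ioo).2 hbound)
  rw [stateT, stateT, add_sub_add_left_eq_sub, ← setIntegral_sdiff measurableSet_Ioo hint hsub]
  calc _ ≤ M * volume.real (Ioo σ T \ Ioo τ T) :=
        norm_setIntegral_le_of_norm_le_const_ae'
          ((measure_mono sdiff_subset).trans_lt measure_Ioo_lt_top)
          (by filter_upwards [hbound] with t ht hmem using ht hmem.1)
    _ = M * (τ - σ) := by
        rw [measureReal_sdiff hsub measurableSet_Ioo measure_Ioo_lt_top.ne,
          Real.volume_real_Ioo_of_le (hστ.trans hτT), Real.volume_real_Ioo_of_le hτT]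
        ring

end Control

section Steering

variable {E : Type*} [NormedAddCommGroup E] [InnerProductSpace ℂ E]
  {U : ℝ → E →L[ℂ] E} {B : E →L[ℂ] E} {y₀ z_d : E} {T M τ ρ : ℝ}

def CanSteer (U : ℝ → E →L[ℂ] E) (B : E →L[ℂ] E) (y₀ z_d : E) (T M τ ρ : ℝ) : Prop :=
  ∃ u : ℝ → E, AEStronglyMeasurable u volume ∧ (∀ᵐ t, t ∈ Ioo τ T → ‖u t‖ ≤ M) ∧
    ‖stateT U B T τ u y₀ - z_d‖ ≤ ρ

theorem CanSteer.mono {M' ρ' : ℝ} (h : CanSteer U B y₀ z_d T M τ ρ) (hM : M ≤ M')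
    (hρ : ρ ≤ ρ') : CanSteer U B y₀ z_d T M' τ ρ' := by
  obtain ⟨u, hu, huM, hue⟩ := h
  exact ⟨u, hu, by filter_upwards [huM] with t ht hmem using (ht hmem).trans hM, hue.trans hρ⟩

theorem CanSteer.mono_start {σ : ℝ} (h : CanSteer U B y₀ z_d T M σ ρ) (hτσ : τ ≤ σ)
    (hM : 0 ≤ M) : CanSteer U B y₀ z_d T M τ ρ := by
  obtain ⟨u, hu, huM, hue⟩ := h
  exact ⟨(Ioo σ T).indicator u, hu.indicator measurableSet_Ioo,
    (ae_norm_indicator_le hM huM).mono fun t ht _ => ht, by rwa [stateT_indicator hτσ]⟩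

theorem CanSteer.delay (hU : IsUnitaryGroup U) (hB : IsOrthProj B) {σ : ℝ}
    (h : CanSteer U B y₀ z_d T M σ ρ) (hστ : σ ≤ τ) (hτT : τ ≤ T) :
    CanSteer U B y₀ z_d T M τ (ρ + M * (τ - σ)) := by
  obtain ⟨u, hu, huM, hue⟩ := h
  refine ⟨u, hu, ?_, ?_⟩
  · filter_upwards [huM] with t ht hmem using ht ⟨hστ.trans_lt hmem.1, hmem.2⟩
  · calc ‖stateT U B T τ u y₀ - z_d‖
        ≤ ‖stateT U B T τ u y₀ - stateT U B T σ u y₀‖ + ‖stateT U B T σ u y₀ - z_d‖ :=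
          norm_sub_le_norm_sub_add_norm_sub _ _ _
      _ ≤ M * (τ - σ) + ρ := by
          rw [norm_sub_rev]
          exact add_le_add (norm_stateT_sub_stateT_le hU hB hστ hτT hu huM y₀) hue
      _ = ρ + M * (τ - σ) := add_comm _ _

theorem CanSteer.norm_sub_le (hU : IsUnitaryGroup U) (hB : IsOrthProj B)
    (h : CanSteer U B y₀ z_d T M τ ρ) (hτT : τ ≤ T) : ‖U T y₀ - z_d‖ ≤ ρ + M * (T - τ) := by
  obtain ⟨u, -, -, hue⟩ := h.delay hU hB hτT le_rfl
  rwa [stateT_self] at hue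

theorem canSteer_iff_exists_Lp :
    CanSteer U B y₀ z_d T M τ ρ ↔ ∃ v : Lp E 2 (volume.restrict (Ioo τ T)),
      (∀ᵐ s ∂volume.restrict (Ioo τ T), ‖v s‖ ≤ M) ∧ ‖stateT U B T τ v y₀ - z_d‖ ≤ ρ := by
  constructor
  · rintro ⟨u, hu, huM, hue⟩
    have huM' := (ae_restrict_iff' measurableSet_Ioo).2 huM
    have hu2 : MemLp u 2 (volume.restrict (Ioo τ T)) := MemLp.of_bound hu.restrict M huM'
    refine ⟨hu2.toLp u, ?_, by rwa [stateT_congr_ae hu2.coeFn_toLp]⟩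
    filter_upwards [hu2.coeFn_toLp, huM'] with s h1 h2
    rwa [h1]
  · rintro ⟨v, hvM, hve⟩
    obtain ⟨f, hfm, hvf⟩ := Lp.aestronglyMeasurable v
    refine ⟨f, hfm.aestronglyMeasurable, (ae_restrict_iff' measurableSet_Ioo).1 ?_,
      by rwa [← stateT_congr_ae hvf]⟩
    filter_upwards [hvM, hvf] with s h1 h2
    rwa [← h2]

theorem memLp_observation (hU : IsUnitaryGroup U) (hB : IsOrthProj B) (μ : Measure ℝ)
    [IsFiniteMeasure μ] (T : ℝ) (h : E) : MemLp (fun s => B (U (s - T) h)) 2 μ :=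
  MemLp.of_bound (B.continuous.comp ((hU.2.2.2 h).comp
      (continuous_id.sub continuous_const))).aestronglyMeasurable ‖h‖
    (Eventually.of_forall fun _ => (hB.norm_le _).trans_eq (hU.norm_map _ _))

end Steering

section Attainment

variable {E : Type*} [NormedAddCommGroup E] [InnerProductSpace ℂ E] [CompleteSpace E]
  {U : ℝ → E →L[ℂ] E} {B : E →L[ℂ] E} {y₀ z_d : E} {T M τ ρ : ℝ}

theorem inner_toLp_observation (hU : IsUnitaryGroup U) (hB : IsOrthProj B)
    (v : Lp E 2 (volume.restrict (Ioo τ T))) (h : E) :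
    ⟪v, (memLp_observation hU hB _ T h).toLp _⟫_ℂ =
      ⟪∫ s in Ioo τ T, U (T - s) (B (v s)), h⟫_ℂ := by
  have hint : Integrable (fun s => U (T - s) (B (v s))) (volume.restrict (Ioo τ T)) :=
    ((Lp.memLp v).integrable one_le_two).norm.mono'
      (hU.aestronglyMeasurable_integrand (Lp.aestronglyMeasurable v) T)
      (Eventually.of_forall fun s => norm_integrand_le hU hB T s _)
  conv_rhs => rw [← inner_conj_symm, ← integral_inner hint, ← integral_conj]
  rw [L2.inner_def]
  refine integral_congr_ae ?_
  filter_upwards [(memLp_observation hU hB _ T h).coeFn_toLp] with s hs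
  rw [hs, inner_conj_symm, hU.inner_map_left, neg_sub, ← hB.2.2]

theorem canSteer_of_forall_pos (hU : IsUnitaryGroup U) (hB : IsOrthProj B) (hM : 0 ≤ M)
    (h : ∀ ε > 0, CanSteer U B y₀ z_d T (M + ε) τ (ρ + ε)) : CanSteer U B y₀ z_d T M τ ρ := by
  set μ := volume.restrict (Ioo τ T)
  have hρ : 0 ≤ ρ := le_of_forall_sub_le fun ε hε => by
    obtain ⟨u, -, -, hue⟩ := h ε hε
    linarith [norm_nonneg (stateT U B T τ u y₀ - z_d)]
  have herr (v : Lp E 2 μ) (h : E) :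
      RCLike.re ⟪v, (memLp_observation hU hB μ T h).toLp _⟫_ℂ =
        RCLike.re ⟪z_d - U T y₀, h⟫_ℂ + RCLike.re ⟪stateT U B T τ v y₀ - z_d, h⟫_ℂ := by
    rw [inner_toLp_observation hU hB, ← map_add, ← inner_add_left, stateT]
    congr 3
    abel
  -- `‖v‖ ≤ M` a.e. is tested against all of `L²`, the distance to `z_d` against all `h : E`
  let test : Lp E 2 μ ⊕ E → Lp E 2 μ :=
    Sum.elim id fun h => (memLp_observation hU hB μ T h).toLp _
  let β : Lp E 2 μ ⊕ E → ℝ :=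
    Sum.elim (fun g => M * ∫ a, ‖g a‖ ∂μ) fun h => RCLike.re ⟪z_d - U T y₀, h⟫_ℂ + ρ * ‖h‖
  let γ : Lp E 2 μ ⊕ E → ℝ := Sum.elim (fun g => ∫ a, ‖g a‖ ∂μ) fun h => ‖h‖
  have hγ : ∀ i, 0 ≤ γ i := by
    rintro (g | h); exacts [integral_nonneg fun a => norm_nonneg _, norm_nonneg h]
  have happrox (ε : ℝ) (hε : 0 < ε) :
      ∃ v : Lp E 2 μ, ‖v‖ ≤ measureUnivNNReal μ ^ (2 : ℝ≥0∞).toReal⁻¹ * (M + 1) ∧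
        ∀ i, RCLike.re ⟪v, test i⟫_ℂ ≤ β i + ε * γ i := by
    obtain ⟨v, hvM, hve⟩ := canSteer_iff_exists_Lp.1 (h (min ε 1) (by positivity))
    refine ⟨v, (Lp.norm_le_of_ae_bound (by positivity) hvM).trans
      (mul_le_mul_of_nonneg_left (by linarith [min_le_right ε 1]) (by positivity)), ?_⟩
    rintro (g | h)
    · have := (ae_norm_le_iff_forall_re_inner_le (𝕜 := ℂ) v (by positivity)).1 hvM g
      have hg : 0 ≤ ∫ a, ‖g a‖ ∂μ := integral_nonneg fun a => norm_nonneg _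
      simp only [test, β, γ, Sum.elim_inl, id_eq]
      nlinarith [min_le_left ε 1]
    · have := (RCLike.re_le_norm _).trans
        (norm_inner_le_norm (𝕜 := ℂ) (stateT U B T τ v y₀ - z_d) h)
      simp only [test, β, γ, Sum.elim_inr, herr]
      nlinarith [min_le_left ε 1, norm_nonneg h]
  obtain ⟨v, -, hv⟩ := exists_forall_re_inner_le_of_forall_pos test β γ hγ happrox
  refine canSteer_iff_exists_Lp.2 ⟨v,
    (ae_norm_le_iff_forall_re_inner_le (𝕜 := ℂ) v hM).2 fun g => hv (.inl g), ?_⟩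
  have hx := hv (.inr (stateT U B T τ v y₀ - z_d))
  simp only [test, β, Sum.elim_inr, herr, inner_self_eq_norm_sq] at hx
  nlinarith [norm_nonneg (stateT U B T τ v y₀ - z_d)]

end Attainment

section OptimalTime

variable {E : Type*} [NormedAddCommGroup E] [InnerProductSpace ℂ E]
  {U : ℝ → E →L[ℂ] E} {B : E →L[ℂ] E} {y₀ z_d : E} {T M r : ℝ}

theorem canSteer_sSup [CompleteSpace E] (hU : IsUnitaryGroup U) (hB : IsOrthProj B)
    (hM : 0 < M) {S : Set ℝ} (hS : S.Nonempty) (hST : ∀ τ ∈ S, τ ≤ T)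
    (h : ∀ τ ∈ S, CanSteer U B y₀ z_d T M τ r) : CanSteer U B y₀ z_d T M (sSup S) r := by
  refine canSteer_of_forall_pos hU hB hM.le fun ε hε => ?_
  obtain ⟨τ, hτS, hτ⟩ := exists_lt_of_lt_csSup hS (sub_lt_self (sSup S) (div_pos hε hM))
  refine ((h τ hτS).delay hU hB (le_csSup ⟨T, hST⟩ hτS) (csSup_le hS hST)).mono
    (by linarith) ?_
  have := (lt_div_iff₀' hM).1 (sub_lt_comm.1 hτ)
  linarith

theorem wadmSet_nonempty (hEC : EC U B) (hT : 0 < T) (hr : 0 ≤ r) :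
    (WadmSet U B y₀ z_d T 0 r).Nonempty := by
  obtain ⟨C, -, hC⟩ := hEC T hT
  obtain ⟨u, hu, huC, hreach⟩ := hC y₀ z_d
  exact ⟨u, ⟨hu, _, huC⟩, by rwa [hreach, sub_self, norm_zero]⟩

theorem canSteer_of_MNP_lt {τ M' : ℝ} (hτ : 0 ≤ τ) (hW : (WadmSet U B y₀ z_d T τ r).Nonempty)
    (h : MNP U B y₀ z_d T τ r < M') : CanSteer U B y₀ z_d T M' τ r := by
  obtain ⟨_, ⟨w, ⟨⟨hw, c, hc⟩, hwr⟩, rfl⟩, hlt⟩ := exists_lt_of_csInf_lt (hW.image _) h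
  have hc' : ∀ᵐ t, t ∈ Ioo τ T → ‖w t‖ ≤ c := by
    filter_upwards [hc] with t ht hmem using ht ⟨hτ.trans_lt hmem.1, hmem.2⟩
  exact ⟨w, hw, ae_norm_le_of_supNorm_lt hc' hlt, hwr⟩

theorem MNP_le_of_canSteer (hM : 0 ≤ M) (h : CanSteer U B y₀ z_d T M 0 r) :
    MNP U B y₀ z_d T 0 r ≤ M := by
  obtain ⟨u, hu, huM, hue⟩ := h
  have hbdd : BddBelow ((fun v => supNorm v 0 T) '' WadmSet U B y₀ z_d T 0 r) := by
    refine ⟨0, ?_⟩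
    rintro _ ⟨w, -, rfl⟩
    exact Real.sInf_nonneg fun c hc => hc.1
  exact (csInf_le hbdd ⟨u, ⟨⟨hu, M, huM⟩, hue⟩, rfl⟩).trans (supNorm_le hM huM)

theorem canSteer_of_mem_UadmSet {τ₀ τ : ℝ} {u : ℝ → E} (hu : u ∈ UadmSet M τ₀ T) (hτ : τ₀ ≤ τ)
    (hue : ‖stateT U B T τ u y₀ - z_d‖ ≤ r) : CanSteer U B y₀ z_d T M τ r :=
  ⟨u, hu.1.1, by filter_upwards [hu.2] with t ht hmem using ht ⟨hτ.trans_lt hmem.1, hmem.2⟩, hue⟩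

theorem CanSteer.exists_mem_VadmSet (hM : 0 ≤ M) {τ : ℝ} (hτ : τ ∈ Ico 0 T)
    (h : CanSteer U B y₀ z_d T M τ r) :
    ∃ v ∈ VadmSet U B y₀ z_d T M r, ‖stateT U B T τ v y₀ - z_d‖ ≤ r := by
  obtain ⟨u, hu, huM, hue⟩ := h
  have hvM := ae_norm_indicator_le hM huM
  have hve : ‖stateT U B T τ ((Ioo τ T).indicator u) y₀ - z_d‖ ≤ r := by
    rwa [stateT_indicator le_rfl]
  exact ⟨_, ⟨τ, hτ, ⟨⟨hu.indicator measurableSet_Ioo, M, hvM.mono fun t ht _ => ht⟩,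
    hvM.mono fun t ht _ => ht⟩, hve⟩, hve⟩

theorem tauTP_eq_sSup (hM : 0 ≤ M)
    (hR : {τ | τ ∈ Ico 0 T ∧ CanSteer U B y₀ z_d T M τ r}.Nonempty) :
    tauTP U B y₀ z_d T M r = sSup {τ | τ ∈ Ico 0 T ∧ CanSteer U B y₀ z_d T M τ r} := by
  set R := {τ | τ ∈ Ico 0 T ∧ CanSteer U B y₀ z_d T M τ r}
  have hRbdd : BddAbove R := ⟨T, fun τ hτ => hτ.1.2.le⟩
  obtain ⟨τ₁, hτ₁⟩ := hR
  have hR0 : 0 ≤ sSup R := hτ₁.1.1.trans (le_csSup hRbdd hτ₁)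
  have htauOf (u : ℝ → E) : tauOf U B y₀ z_d T r u ≤ T :=
    Real.sSup_le (fun τ hτ => hτ.1.2.le) (hτ₁.1.1.trans hτ₁.1.2.le)
  apply le_antisymm
  · refine Real.sSup_le ?_ hR0
    rintro _ ⟨u, ⟨τ₀, hτ₀, hu, hue⟩, rfl⟩
    refine Real.sSup_le (fun τ hτ => ?_) hR0
    rcases le_total τ₀ τ with hle | hle
    · exact le_csSup hRbdd ⟨hτ.1, canSteer_of_mem_UadmSet hu hle hτ.2⟩
    · exact hle.trans (le_csSup hRbdd ⟨hτ₀, canSteer_of_mem_UadmSet hu le_rfl hue⟩)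
  · refine csSup_le ⟨τ₁, hτ₁⟩ fun τ hτ => ?_
    obtain ⟨v, hv, hve⟩ := hτ.2.exists_mem_VadmSet hM hτ.1
    calc τ ≤ tauOf U B y₀ z_d T r v := le_csSup ⟨T, fun _ hx => hx.1.2.le⟩ ⟨hτ.1, hve⟩
      _ ≤ tauTP U B y₀ z_d T M r :=
        le_csSup ⟨T, by rintro _ ⟨u, -, rfl⟩; exact htauOf u⟩ ⟨v, hv, rfl⟩

end OptimalTime

theorem tp_has_optimal_control_iff_general
    (U : ℝ → H →L[ℂ] H) (B : H →L[ℂ] H) (hU : IsUnitaryGroup U) (hB : IsOrthProj B)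
    (hEC : EC U B)
    (T : ℝ) (hT : 0 < T) (y₀ z_d : H)
    (M r : ℝ) (hr : r ∈ Ioo (0 : ℝ) ‖U T y₀ - z_d‖) (hM : 0 < M) :
    (∃ u : ℝ → H, IsOptTP U B y₀ z_d T M r u) ↔ MNP U B y₀ z_d T 0 r ≤ M := by
  constructor
  · rintro ⟨u, ⟨τ₀, hτ₀, hu, hue⟩, -⟩
    exact MNP_le_of_canSteer hM.le
      ((canSteer_of_mem_UadmSet hu le_rfl hue).mono_start hτ₀.1 hM.le)
  intro hMNP
  have h0 : CanSteer U B y₀ z_d T M 0 r := canSteer_of_forall_pos hU hB hM.le fun ε hε =>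
    (canSteer_of_MNP_lt le_rfl (wadmSet_nonempty hEC hT hr.1.le) (by linarith)).mono le_rfl
      (by linarith)
  set R := {τ | τ ∈ Ico 0 T ∧ CanSteer U B y₀ z_d T M τ r}
  have h0R : (0 : ℝ) ∈ R := ⟨⟨le_rfl, hT⟩, h0⟩
  have hRT : ∀ τ ∈ R, τ ≤ T := fun τ hτ => hτ.1.2.le
  have hRle : ∀ τ ∈ R, τ ≤ T - (‖U T y₀ - z_d‖ - r) / M := fun τ hτ => by
    have := hτ.2.norm_sub_le hU hB (hRT τ hτ)
    rw [le_sub_comm, div_le_iff₀ hM]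
    linarith
  have hsupT : sSup R < T := (csSup_le ⟨0, h0R⟩ hRle).trans_lt
    (sub_lt_self T (div_pos (sub_pos.2 hr.2) hM))
  obtain ⟨v, hv, hve⟩ := (canSteer_sSup hU hB hM ⟨0, h0R⟩ hRT fun τ hτ => hτ.2).exists_mem_VadmSet
    hM.le ⟨le_csSup ⟨T, hRT⟩ h0R, hsupT⟩
  exact ⟨v, hv, by rwa [tauTP_eq_sSup hM.le ⟨0, h0R⟩]⟩

theorem tp_has_optimal_control_iff
    (U : ℝ → H →L[ℂ] H) (B : H →L[ℂ] H) (hU : IsUnitaryGroup U) (hB : IsOrthProj B)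
    (hEC : EC U B) (hECrev : EC (fun t => U (-t)) B)
    (hUC : UC U B)
    (T : ℝ) (hT : 0 < T) (y₀ z_d : H) (hrT : 0 < ‖U T y₀ - z_d‖)
    (M r : ℝ) (hr : r ∈ Ioo (0 : ℝ) ‖U T y₀ - z_d‖) (hM : 0 < M) :
    (∃ u : ℝ → H, IsOptTP U B y₀ z_d T M r u) ↔ MNP U B y₀ z_d T 0 r ≤ M :=
  tp_has_optimal_control_iff_general U B hU hB hEC T hT y₀ z_d M r hr hM
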